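/- Let R be a DVR with uniformizer π, Γ an abstract group, and E a Γ-representation on a finitely generated R-module such that the torsion submodule of E is killed by π (i.e., π·E_tors = 0, equivalently πE is torsion-free). If the quotient C = E/πE admits a Γ-equivariant surjection from a finitely generated torsion-free Γ-representation C̃, then the fiber product Ẽ = E ×_C C̃ (along the quotient map E → C and the surjection C̃ → C) is a finitely generated torsion-free R-module, and the projection Ẽ → E is a Γ-equivariant surjection. -/

import Mathlib

/-!
A torsion element `(e, c̃)` of `Ẽ` has `c̃ = 0` because `C̃` is torsion-free, so `q e = 0` and
`e = π e'`. Since `e` is torsion, `π e = 0`, hence `π² e' = 0`: now `e'` is torsion, so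
`e = π e' = 0`. Finite generation holds because `Ẽ` is a submodule of the finitely generated
module `E × C̃` over the noetherian ring `R`; surjectivity of `Ẽ → E` comes from that of `σ`,
and equivariance from that of `q` and `σ`.
-/

open LinearMap

section FiberProduct

variable {R M N P : Type*} [CommRing R] [AddCommGroup M] [Module R M] [AddCommGroup N]
  [Module R N] [AddCommGroup P] [Module R P] (f : M →ₗ[R] N) (g : P →ₗ[R] N)

theorem mem_ker_comp_fst_sub_comp_snd_iff {x : M × P} :
    x ∈ ker (f ∘ₗ fst R M P - g ∘ₗ snd R M P) ↔ f x.1 = g x.2 := by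
  simp [sub_eq_zero]

theorem exists_mem_ker_comp_fst_sub_comp_snd_fst_eq (hg : Function.Surjective g) (m : M) :
    ∃ x ∈ ker (f ∘ₗ fst R M P - g ∘ₗ snd R M P), x.1 = m := by
  obtain ⟨p, hp⟩ := hg (f m)
  exact ⟨(m, p), (mem_ker_comp_fst_sub_comp_snd_iff f g).mpr hp.symm, rfl⟩

theorem prodMap_mem_ker_comp_fst_sub_comp_snd {φ : M →ₗ[R] M} {ψ : P →ₗ[R] P}
    {θ : N →ₗ[R] N} (hf : f ∘ₗ φ = θ ∘ₗ f) (hg : g ∘ₗ ψ = θ ∘ₗ g) {x : M × P}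
    (hx : x ∈ ker (f ∘ₗ fst R M P - g ∘ₗ snd R M P)) :
    (φ x.1, ψ x.2) ∈ ker (f ∘ₗ fst R M P - g ∘ₗ snd R M P) := by
  rw [mem_ker_comp_fst_sub_comp_snd_iff] at hx ⊢
  rw [← comp_apply, hf, ← comp_apply, hg, comp_apply, comp_apply, hx]

variable [IsDomain R]

theorem eq_zero_of_torsion_of_mem_range_smul {a : R}
    (ha : ∀ m : M, (∃ r : R, r ≠ 0 ∧ r • m = 0) → a • m = 0) {m : M}
    (hm : ∃ r : R, r ≠ 0 ∧ r • m = 0) (hma : m ∈ range (a • (LinearMap.id : M →ₗ[R] M))) :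
    m = 0 := by
  obtain ⟨m', rfl⟩ := hma
  simp only [LinearMap.smul_apply, id_apply] at hm ⊢
  by_cases ha0 : a = 0
  · rw [ha0, zero_smul]
  have ha2 : (a * a) • m' = 0 := by rw [mul_smul]; exact ha _ hm
  exact ha m' ⟨a * a, mul_ne_zero ha0 ha0, ha2⟩

theorem noZeroSMulDivisors_ker_comp_fst_sub_comp_snd [NoZeroSMulDivisors R P] {a : R}
    (ha : ∀ m : M, (∃ r : R, r ≠ 0 ∧ r • m = 0) → a • m = 0)
    (hf : ker f = range (a • (LinearMap.id : M →ₗ[R] M))) :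
    NoZeroSMulDivisors R (ker (f ∘ₗ fst R M P - g ∘ₗ snd R M P)) := by
  refine ⟨fun {r x} hrx => or_iff_not_imp_left.mpr fun hr => ?_⟩
  have hrx' : r • (x : M × P) = 0 := congrArg Subtype.val hrx
  have hx₂ : (x : M × P).2 = 0 := (smul_eq_zero.mp congr(Prod.snd $hrx')).resolve_left hr
  have hx₁ : (x : M × P).1 ∈ ker f := by
    rw [mem_ker, (mem_ker_comp_fst_sub_comp_snd_iff f g).mp x.2, hx₂, map_zero]
  rw [hf] at hx₁
  have hx₁' := eq_zero_of_torsion_of_mem_range_smul ha ⟨r, hr, congr(Prod.fst $hrx')⟩ hx₁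
  exact Subtype.ext (Prod.ext hx₁' hx₂)

end FiberProduct

theorem stmt4 {R : Type} [CommRing R] [IsDomain R] [IsDiscreteValuationRing R]
    (π : R) (Γ : Type) [Group Γ]
    (E : Type) [AddCommGroup E] [Module R E] [Module.Finite R E]
    (ρ : Representation R Γ E)
    (htors : ∀ e : E, (∃ r : R, r ≠ 0 ∧ r • e = 0) → π • e = 0)
    (C : Type) [AddCommGroup C] [Module R C] (τ : Representation R Γ C)
    (q : E →ₗ[R] C)
    (hqker : LinearMap.ker q = LinearMap.range ((π : R) • (LinearMap.id : E →ₗ[R] E)))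
    (hqequiv : ∀ γ : Γ, q ∘ₗ ρ γ = τ γ ∘ₗ q)
    (Ct : Type) [AddCommGroup Ct] [Module R Ct] [Module.Finite R Ct]
    [NoZeroSMulDivisors R Ct]
    (τt : Representation R Γ Ct)
    (σ : Ct →ₗ[R] C) (hσsurj : Function.Surjective σ)
    (hσequiv : ∀ γ : Γ, σ ∘ₗ τt γ = τ γ ∘ₗ σ) :
    Module.Finite R
        (LinearMap.ker (q ∘ₗ LinearMap.fst R E Ct - σ ∘ₗ LinearMap.snd R E Ct)) ∧
    NoZeroSMulDivisors R
        (LinearMap.ker (q ∘ₗ LinearMap.fst R E Ct - σ ∘ₗ LinearMap.snd R E Ct)) ∧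
    (∀ e : E, ∃ x ∈ LinearMap.ker (q ∘ₗ LinearMap.fst R E Ct - σ ∘ₗ LinearMap.snd R E Ct),
        x.1 = e) ∧
    (∀ γ : Γ, ∀ x ∈ LinearMap.ker (q ∘ₗ LinearMap.fst R E Ct - σ ∘ₗ LinearMap.snd R E Ct),
        (ρ γ x.1, τt γ x.2) ∈
          LinearMap.ker (q ∘ₗ LinearMap.fst R E Ct - σ ∘ₗ LinearMap.snd R E Ct)) :=
  ⟨inferInstance, noZeroSMulDivisors_ker_comp_fst_sub_comp_snd q σ htors hqker,
    exists_mem_ker_comp_fst_sub_comp_snd_fst_eq q σ hσsurj,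
    fun γ _ => prodMap_mem_ker_comp_fst_sub_comp_snd q σ (hqequiv γ) (hσequiv γ)⟩
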